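/- arXiv:1807.08125 — 3 statements merged into one kernel-verified Lean document; each statement's English description precedes it below -/
import Mathlib

section
/- Let N, p ≥ 1, let X be an N×p real matrix with rows x_i, let y ∈ ℝ^N, and define the logistic GLM loss ℓ(β₀, β) = (1/N) Σ_{i=1}^{N} [ log(1 + exp(y_i·(β₀ + ⟨x_i, β⟩))) − y_i·(β₀ + ⟨x_i, β⟩) ]. Let S₁, S₂ ⊂ {1,…,p} be disjoint with a bijection e : S₁ → S₂ such that the columns of X satisfy X_{·,k} = X_{·,e(k)} for all k ∈ S₁. Let D_G be an m×p real matrix whose rows split into three groups: rows supported only on coordinates in S₁, rows supported only on coordinates in S₂, and rows supported only on coordinates in (S₁∪S₂)^c; moreover there is a bijection r between the first two groups of rows with (D_G)_{r(j), e(k)} = (D_G)_{j,k} for every row j of the first group and every k ∈ S₁. Fix λ ≥ 0 and set g(β₀, β) = ℓ(β₀, β) + λ‖D_G β‖₁. Suppose (β̂₀, β̂) minimizes g over ℝ × ℝ^p. For s ∈ [0,1] define β̂* by: β̂*_k = β̂_k for k ∉ S₁∪S₂; β̂*_k = s·(β̂_k + β̂_{e(k)}) for k ∈ S₁; β̂*_k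 = (1−s)·(β̂_{e⁻¹(k)} + β̂_k) for k ∈ S₂. Then g(β̂₀, β̂*) = g(β̂₀, β̂), so (β̂₀, β̂*) is also a global minimizer of g, for every s ∈ [0,1]. -/
/-- The logistic GLM loss
`ℓ(β₀, β) = (1/N) Σ_i [log(1 + exp(y_i (β₀ + ⟨x_i, β⟩))) − y_i (β₀ + ⟨x_i, β⟩)]`. -/
noncomputable def logloss {N p : ℕ} (X : Matrix (Fin N) (Fin p) ℝ) (y : Fin N → ℝ)
    (β₀ : ℝ) (β : Fin p → ℝ) : ℝ :=
  (1 / (N : ℝ)) * ∑ i, (Real.log (1 + Real.exp (y i * (β₀ + ∑ j, X i j * β j)))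
      - y i * (β₀ + ∑ j, X i j * β j))

/-- The ℓ₁ norm of a vector. -/
noncomputable def l1norm {m : ℕ} (v : Fin m → ℝ) : ℝ := ∑ t, |v t|

/-- Lemma 1 (supplementary): the generalized-lasso penalized logistic regression objective
`g(β₀,β) = ℓ(β₀,β) + λ‖D_G β‖₁` admits a one-parameter family of global minimizers when two
isolated regions `S₁`, `S₂` of the feature graph are exact copies of each other. -/
theorem gen_lasso_family_of_minimizers
    {N p m : ℕ} (hN : 1 ≤ N) (hp : 1 ≤ p)
    (X : Matrix (Fin N) (Fin p) ℝ) (y : Fin N → ℝ)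
    (S₁ S₂ : Finset (Fin p)) (hdisj : Disjoint S₁ S₂)
    -- `e` is a bijection from `S₁` onto `S₂`, with inverse `einv`
    (e einv : Fin p → Fin p)
    (he₁ : ∀ k ∈ S₁, e k ∈ S₂) (he₂ : ∀ k ∈ S₂, einv k ∈ S₁)
    (he₃ : ∀ k ∈ S₁, einv (e k) = k) (he₄ : ∀ k ∈ S₂, e (einv k) = k)
    -- the matched design columns coincide: X_{·,k} = X_{·,e(k)} for k ∈ S₁
    (hcol : ∀ i, ∀ k ∈ S₁, X i k = X i (e k))
    (DG : Matrix (Fin m) (Fin p) ℝ)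
    -- the rows of D_G split into three groups R₁, R₂, R₃
    (R₁ R₂ R₃ : Finset (Fin m))
    (hcover : ∀ j, j ∈ R₁ ∨ j ∈ R₂ ∨ j ∈ R₃)
    (hd₁₂ : Disjoint R₁ R₂) (hd₁₃ : Disjoint R₁ R₃) (hd₂₃ : Disjoint R₂ R₃)
    -- rows of the first group are supported only on S₁, of the second only on S₂,
    -- of the third only on (S₁ ∪ S₂)ᶜ
    (hsupp₁ : ∀ j ∈ R₁, ∀ k, k ∉ S₁ → DG j k = 0)
    (hsupp₂ : ∀ j ∈ R₂, ∀ k, k ∉ S₂ → DG j k = 0)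
    (hsupp₃ : ∀ j ∈ R₃, ∀ k, k ∈ S₁ ∪ S₂ → DG j k = 0)
    -- `r` is a bijection from the rows in R₁ onto the rows in R₂, with inverse `rinv`,
    -- matching the penalty structure: (D_G)_{r(j), e(k)} = (D_G)_{j,k}
    (r rinv : Fin m → Fin m)
    (hr₁ : ∀ j ∈ R₁, r j ∈ R₂) (hr₂ : ∀ j ∈ R₂, rinv j ∈ R₁)
    (hr₃ : ∀ j ∈ R₁, rinv (r j) = j) (hr₄ : ∀ j ∈ R₂, r (rinv j) = j)
    (hrow : ∀ j ∈ R₁, ∀ k ∈ S₁, DG (r j) (e k) = DG j k)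
    (lam : ℝ) (hlam : 0 ≤ lam)
    (g : ℝ → (Fin p → ℝ) → ℝ)
    (hg : ∀ b₀ b, g b₀ b = logloss X y b₀ b + lam * l1norm (DG.mulVec b))
    -- `(β̂₀, β̂)` is a global minimizer of g
    (βhat₀ : ℝ) (βhat : Fin p → ℝ)
    (hmin : ∀ b₀ b, g βhat₀ βhat ≤ g b₀ b)
    (s : ℝ) (hs : s ∈ Set.Icc (0 : ℝ) 1)
    (βstar : Fin p → ℝ)
    (hβstar : ∀ k, βstar k =
      if k ∈ S₁ then s * (βhat k + βhat (e k))
      else if k ∈ S₂ then (1 - s) * (βhat (einv k) + βhat k)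
      else βhat k) :
    g βhat₀ βstar = g βhat₀ βhat ∧ ∀ b₀ b, g βhat₀ βstar ≤ g b₀ b := by
  obtain ⟨hs0, hs1⟩ := hs
  -- membership facts
  have hnotS₁ : ∀ k ∈ S₂, k ∉ S₁ := fun k hk => Finset.disjoint_right.mp hdisj hk
  have hnotS₂ : ∀ k ∈ S₁, k ∉ S₂ := fun k hk => Finset.disjoint_left.mp hdisj hk
  -- values of βstar
  have hst₁ : ∀ k ∈ S₁, βstar k = s * (βhat k + βhat (e k)) := by
    intro k hk; rw [hβstar k, if_pos hk]
  have hst₂ : ∀ k ∈ S₁, βstar (e k) = (1 - s) * (βhat k + βhat (e k)) := by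
    intro k hk
    rw [hβstar (e k), if_neg (hnotS₁ _ (he₁ k hk)), if_pos (he₁ k hk), he₃ k hk]
  have hst₃ : ∀ k, k ∉ S₁ → k ∉ S₂ → βstar k = βhat k := by
    intro k h1 h2; rw [hβstar k, if_neg h1, if_neg h2]
  -- the inner products agree
  have hinner : ∀ i, (∑ j, X i j * βstar j) = ∑ j, X i j * βhat j := by
    intro i
    have hzero : ∑ j, X i j * (βstar j - βhat j) = 0 := by
      have hrestrict : ∑ j, X i j * (βstar j - βhat j)
          = ∑ j ∈ S₁ ∪ S₂, X i j * (βstar j - βhat j) := by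
        symm
        apply Finset.sum_subset (Finset.subset_univ _)
        intro k _ hk
        have h1 : k ∉ S₁ := fun h => hk (Finset.mem_union_left _ h)
        have h2 : k ∉ S₂ := fun h => hk (Finset.mem_union_right _ h)
        rw [hst₃ k h1 h2]; ring
      rw [hrestrict, Finset.sum_union hdisj]
      have hS2 : ∑ j ∈ S₂, X i j * (βstar j - βhat j)
          = ∑ j ∈ S₁, X i (e j) * (βstar (e j) - βhat (e j)) := by
        refine Finset.sum_nbij' einv e he₂ he₁ he₄ he₃ ?_
        intro k hk; rw [he₄ k hk]
      rw [hS2, ← Finset.sum_add_distrib]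
      apply Finset.sum_eq_zero
      intro k hk
      rw [hst₁ k hk, hst₂ k hk, ← hcol i k hk]
      ring
    have : (∑ j, X i j * βstar j) - ∑ j, X i j * βhat j = 0 := by
      rw [← hzero, ← Finset.sum_sub_distrib]
      exact Finset.sum_congr rfl fun j _ => by ring
    linarith
  have hloss : logloss X y βhat₀ βstar = logloss X y βhat₀ βhat := by
    unfold logloss
    congr 1
    exact Finset.sum_congr rfl fun i _ => by rw [hinner i]
  -- the penalized term
  set a : Fin m → ℝ := DG.mulVec βhat with ha
  set b : Fin m → ℝ := DG.mulVec βstar with hb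
  have hma : ∀ j, a j = ∑ k, DG j k * βhat k := by
    intro j; simp [ha, Matrix.mulVec, dotProduct]
  have hmb : ∀ j, b j = ∑ k, DG j k * βstar k := by
    intro j; simp [hb, Matrix.mulVec, dotProduct]
  -- two key identities for rows in R₁
  have key1 : ∀ j ∈ R₁, ∑ k ∈ S₁, DG j k * βhat k = a j := by
    intro j hj
    rw [hma j]
    apply Finset.sum_subset (Finset.subset_univ _)
    intro k _ hk
    rw [hsupp₁ j hj k hk, zero_mul]
  have key2 : ∀ j ∈ R₁, ∑ k ∈ S₁, DG j k * βhat (e k) = a (r j) := by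
    intro j hj
    rw [hma (r j)]
    have : ∑ k ∈ S₁, DG j k * βhat (e k) = ∑ k ∈ S₂, DG (r j) k * βhat k := by
      refine Finset.sum_nbij' e einv he₁ he₂ he₃ he₄ ?_
      intro k hk; rw [hrow j hj k hk]
    rw [this]
    apply Finset.sum_subset (Finset.subset_univ _)
    intro k _ hk
    rw [hsupp₂ (r j) (hr₁ j hj) k hk, zero_mul]
  have hR1 : ∀ j ∈ R₁, b j = s * (a j + a (r j)) := by
    intro j hj
    rw [hmb j]
    have hres : ∑ k, DG j k * βstar k = ∑ k ∈ S₁, DG j k * βstar k := by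
      symm
      apply Finset.sum_subset (Finset.subset_univ _)
      intro k _ hk
      rw [hsupp₁ j hj k hk, zero_mul]
    rw [hres, mul_add, ← key1 j hj, ← key2 j hj, Finset.mul_sum, Finset.mul_sum,
      ← Finset.sum_add_distrib]
    apply Finset.sum_congr rfl
    intro k hk
    rw [hst₁ k hk]; ring
  have hR2 : ∀ j ∈ R₂, b j = (1 - s) * (a (rinv j) + a j) := by
    intro j hj
    have hj' : rinv j ∈ R₁ := hr₂ j hj
    have hjr : r (rinv j) = j := hr₄ j hj
    rw [hmb j]
    have hres : ∑ k, DG j k * βstar k = ∑ k ∈ S₂, DG j k * βstar k := by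
      symm
      apply Finset.sum_subset (Finset.subset_univ _)
      intro k _ hk
      rw [hsupp₂ j hj k hk, zero_mul]
    have hre : ∑ k ∈ S₂, DG j k * βstar k
        = ∑ k ∈ S₁, DG (rinv j) k * ((1 - s) * (βhat k + βhat (e k))) := by
      refine Finset.sum_nbij' einv e he₂ he₁ he₄ he₃ ?_
      intro k hk
      have hk' : einv k ∈ S₁ := he₂ k hk
      have h1 : DG (rinv j) (einv k) = DG j k := by
        rw [← hrow (rinv j) hj' (einv k) hk', he₄ k hk, hjr]
      have h2 : βstar k = (1 - s) * (βhat (einv k) + βhat k) := by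
        rw [hβstar k, if_neg (hnotS₁ k hk), if_pos hk]
      rw [h1, h2, he₄ k hk]
    have k2 := key2 (rinv j) hj'
    rw [hjr] at k2
    rw [hres, hre, mul_add, ← key1 (rinv j) hj', ← k2, Finset.mul_sum, Finset.mul_sum,
      ← Finset.sum_add_distrib]
    exact Finset.sum_congr rfl fun k _ => by ring
  have hR3 : ∀ j ∈ R₃, b j = a j := by
    intro j hj
    rw [hmb j, hma j]
    apply Finset.sum_congr rfl
    intro k _
    by_cases hk : k ∈ S₁ ∪ S₂
    · rw [hsupp₃ j hj k hk, zero_mul, zero_mul]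
    · rw [hst₃ k (fun h => hk (Finset.mem_union_left _ h))
        (fun h => hk (Finset.mem_union_right _ h))]
  -- split the index set
  have huniv : (Finset.univ : Finset (Fin m)) = (R₁ ∪ R₂) ∪ R₃ := by
    ext j
    simp only [Finset.mem_univ, Finset.mem_union, true_iff]
    rcases hcover j with h | h | h
    · exact Or.inl (Or.inl h)
    · exact Or.inl (Or.inr h)
    · exact Or.inr h
  have hd₁₂₃ : Disjoint (R₁ ∪ R₂) R₃ := Finset.disjoint_union_left.mpr ⟨hd₁₃, hd₂₃⟩
  have hsplit : ∀ v : Fin m → ℝ, l1norm v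
      = (∑ j ∈ R₁, |v j|) + (∑ j ∈ R₂, |v j|) + ∑ j ∈ R₃, |v j| := by
    intro v
    unfold l1norm
    rw [huniv, Finset.sum_union hd₁₂₃, Finset.sum_union hd₁₂]
  -- penalty inequality
  have hpen : l1norm b ≤ l1norm a := by
    rw [hsplit a, hsplit b]
    have h1 : ∑ j ∈ R₁, |b j| = ∑ j ∈ R₁, s * |a j + a (r j)| := by
      apply Finset.sum_congr rfl
      intro j hj
      rw [hR1 j hj, abs_mul, abs_of_nonneg hs0]
    have h2 : ∑ j ∈ R₂, |b j| = ∑ j ∈ R₁, (1 - s) * |a j + a (r j)| := by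
      rw [Finset.sum_congr rfl (fun j hj => by
        rw [hR2 j hj, abs_mul, abs_of_nonneg (by linarith : (0:ℝ) ≤ 1 - s)])]
      refine Finset.sum_nbij' rinv r hr₂ hr₁ hr₄ hr₃ ?_
      intro j hj
      rw [hr₄ j hj]
    have h3 : ∑ j ∈ R₃, |b j| = ∑ j ∈ R₃, |a j| :=
      Finset.sum_congr rfl fun j hj => by rw [hR3 j hj]
    rw [h1, h2, h3]
    have hcomb : (∑ j ∈ R₁, s * |a j + a (r j)|) + ∑ j ∈ R₁, (1 - s) * |a j + a (r j)|
        = ∑ j ∈ R₁, |a j + a (r j)| := by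
      rw [← Finset.sum_add_distrib]
      exact Finset.sum_congr rfl fun j _ => by ring
    have hR2a : ∑ j ∈ R₂, |a j| = ∑ j ∈ R₁, |a (r j)| := by
      refine Finset.sum_nbij' rinv r hr₂ hr₁ hr₄ hr₃ ?_
      intro j hj; rw [hr₄ j hj]
    have hle : ∑ j ∈ R₁, |a j + a (r j)| ≤ (∑ j ∈ R₁, |a j|) + ∑ j ∈ R₂, |a j| := by
      rw [hR2a, ← Finset.sum_add_distrib]
      exact Finset.sum_le_sum fun j _ => abs_add_le _ _
    linarith
  -- conclude
  have hle : g βhat₀ βstar ≤ g βhat₀ βhat := by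
    rw [hg βhat₀ βstar, hg βhat₀ βhat, hloss]
    have := mul_le_mul_of_nonneg_left hpen hlam
    linarith
  have heq : g βhat₀ βstar = g βhat₀ βhat := le_antisymm hle (hmin βhat₀ βstar)
  exact ⟨heq, fun b₀ b' => heq ▸ hmin b₀ b'⟩
end

section
/- Let p ≥ 1 and let S₁, S₂ ⊂ {1,…,p} be disjoint with a bijection e : S₁ → S₂. Let D_G be an m×p real matrix whose rows split into three groups: rows supported only on coordinates in S₁, rows supported only on coordinates in S₂, and rows supported only on coordinates in (S₁∪S₂)^c; and suppose there is a bijection r between the first two groups of rows with (D_G)_{r(j), e(k)} = (D_G)_{j,k} for every row j of the first group and every k ∈ S₁. For β ∈ ℝ^p and s ∈ [0,1] define β* by: β*_k = β_k for k ∉ S₁∪S₂; β*_k = s·(β_k + β_{e(k)}) for k ∈ S₁; β*_k = (1−s)·(β_{e⁻¹(k)} + β_k) for k ∈ S₂. Then ‖D_G β*‖₁ ≤ ‖D_G β‖₁. -/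
/-- Penalty step of Lemma 1 (supplementary): under the block structure where the penalty
matrix `D_G` decomposes into rows acting only within `S₁`, only within `S₂`, and only within
the complement, with the S₁-block and S₂-block identical under the matching bijections,
redistributing coefficient mass between `S₁` and `S₂` with parameter `s ∈ [0,1]` does not
increase the ℓ₁ penalty `‖D_G β‖₁`. -/
theorem l1_penalty_not_increased_by_redistribution
    {p m : ℕ} (hp : 1 ≤ p)
    (S₁ S₂ : Finset (Fin p)) (hdisj : Disjoint S₁ S₂)
    -- `e` is a bijection from `S₁` onto `S₂`, with inverse `einv`
    (e einv : Fin p → Fin p)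
    (he₁ : ∀ k ∈ S₁, e k ∈ S₂) (he₂ : ∀ k ∈ S₂, einv k ∈ S₁)
    (he₃ : ∀ k ∈ S₁, einv (e k) = k) (he₄ : ∀ k ∈ S₂, e (einv k) = k)
    (DG : Matrix (Fin m) (Fin p) ℝ)
    -- the rows of D_G split into three groups R₁, R₂, R₃
    (R₁ R₂ R₃ : Finset (Fin m))
    (hcover : ∀ j, j ∈ R₁ ∨ j ∈ R₂ ∨ j ∈ R₃)
    (hd₁₂ : Disjoint R₁ R₂) (hd₁₃ : Disjoint R₁ R₃) (hd₂₃ : Disjoint R₂ R₃)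
    -- rows of the first group are supported only on S₁, of the second only on S₂,
    -- of the third only on (S₁ ∪ S₂)ᶜ
    (hsupp₁ : ∀ j ∈ R₁, ∀ k, k ∉ S₁ → DG j k = 0)
    (hsupp₂ : ∀ j ∈ R₂, ∀ k, k ∉ S₂ → DG j k = 0)
    (hsupp₃ : ∀ j ∈ R₃, ∀ k, k ∈ S₁ ∪ S₂ → DG j k = 0)
    -- `r` is a bijection from the rows in R₁ onto the rows in R₂, with inverse `rinv`,
    -- matching the penalty structure: (D_G)_{r(j), e(k)} = (D_G)_{j,k}
    (r rinv : Fin m → Fin m)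
    (hr₁ : ∀ j ∈ R₁, r j ∈ R₂) (hr₂ : ∀ j ∈ R₂, rinv j ∈ R₁)
    (hr₃ : ∀ j ∈ R₁, rinv (r j) = j) (hr₄ : ∀ j ∈ R₂, r (rinv j) = j)
    (hrow : ∀ j ∈ R₁, ∀ k ∈ S₁, DG (r j) (e k) = DG j k)
    (β : Fin p → ℝ) (s : ℝ) (hs : s ∈ Set.Icc (0 : ℝ) 1)
    (βstar : Fin p → ℝ)
    (hβstar : ∀ k, βstar k =
      if k ∈ S₁ then s * (β k + β (e k))
      else if k ∈ S₂ then (1 - s) * (β (einv k) + β k)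
      else β k) :
    l1norm (DG.mulVec βstar) ≤ l1norm (DG.mulVec β) := by
  obtain ⟨hs0, hs1⟩ := hs
  set v := DG.mulVec β with hv
  set w := DG.mulVec βstar with hw
  have restrict : ∀ (j : Fin m) (T : Finset (Fin p)) (x : Fin p → ℝ),
      (∀ k, k ∉ T → DG j k = 0) → DG.mulVec x j = ∑ k ∈ T, DG j k * x k := by
    intro j T x h
    simp only [Matrix.mulVec, dotProduct]
    exact (Finset.sum_subset (Finset.subset_univ T)
      (fun k _ hk => by rw [h k hk, zero_mul])).symm
  have hnS₁ : ∀ k ∈ S₂, k ∉ S₁ := fun k hk => Finset.disjoint_right.mp hdisj hk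
  -- value on R₁
  have hw1 : ∀ j ∈ R₁, w j = s * (v j + v (r j)) := by
    intro j hj
    have h1 : w j = ∑ k ∈ S₁, DG j k * (s * (β k + β (e k))) := by
      rw [hw, restrict j S₁ βstar (fun k hk => hsupp₁ j hj k hk)]
      exact Finset.sum_congr rfl fun k hk => by rw [hβstar k, if_pos hk]
    have h2 : v j = ∑ k ∈ S₁, DG j k * β k :=
      restrict j S₁ β (fun k hk => hsupp₁ j hj k hk)
    have h3 : v (r j) = ∑ k ∈ S₁, DG j k * β (e k) := by
      rw [hv, restrict (r j) S₂ β (fun k hk => hsupp₂ (r j) (hr₁ j hj) k hk)]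
      refine Finset.sum_nbij' einv e (fun k hk => he₂ k hk) (fun k hk => he₁ k hk)
        (fun k hk => he₄ k hk) (fun k hk => he₃ k hk) (fun k hk => ?_)
      rw [he₄ k hk]
      rw [show DG j (einv k) = DG (r j) (e (einv k)) from
        (hrow j hj (einv k) (he₂ k hk)).symm, he₄ k hk]
    rw [h1, h2, h3, mul_add, Finset.mul_sum, Finset.mul_sum, ← Finset.sum_add_distrib]
    exact Finset.sum_congr rfl fun k _ => by ring
  -- value on R₂
  have hw2 : ∀ j ∈ R₂, w j = (1 - s) * (v (rinv j) + v j) := by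
    intro j hj
    have hj1 : rinv j ∈ R₁ := hr₂ j hj
    have h1 : w j = ∑ k ∈ S₁, DG (rinv j) k * ((1 - s) * (β k + β (e k))) := by
      rw [hw, restrict j S₂ βstar (fun k hk => hsupp₂ j hj k hk)]
      refine Finset.sum_nbij' einv e (fun k hk => he₂ k hk) (fun k hk => he₁ k hk)
        (fun k hk => he₄ k hk) (fun k hk => he₃ k hk) (fun k hk => ?_)
      have hek : e (einv k) = k := he₄ k hk
      have hDG : DG (rinv j) (einv k) = DG j k := by
        rw [show DG j k = DG (r (rinv j)) (e (einv k)) by rw [hek, hr₄ j hj]]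
        exact (hrow (rinv j) hj1 (einv k) (he₂ k hk)).symm
      rw [hβstar k, if_neg (hnS₁ k hk), if_pos hk, hDG, hek]
    have h2 : v (rinv j) = ∑ k ∈ S₁, DG (rinv j) k * β k :=
      restrict (rinv j) S₁ β (fun k hk => hsupp₁ (rinv j) hj1 k hk)
    have h3 : v j = ∑ k ∈ S₁, DG (rinv j) k * β (e k) := by
      rw [hv, restrict j S₂ β (fun k hk => hsupp₂ j hj k hk)]
      refine Finset.sum_nbij' einv e (fun k hk => he₂ k hk) (fun k hk => he₁ k hk)
        (fun k hk => he₄ k hk) (fun k hk => he₃ k hk) (fun k hk => ?_)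
      have hek : e (einv k) = k := he₄ k hk
      have hDG : DG (rinv j) (einv k) = DG j k := by
        rw [show DG j k = DG (r (rinv j)) (e (einv k)) by rw [hek, hr₄ j hj]]
        exact (hrow (rinv j) hj1 (einv k) (he₂ k hk)).symm
      rw [hDG, hek]
    rw [h1, h2, h3, mul_add, Finset.mul_sum, Finset.mul_sum, ← Finset.sum_add_distrib]
    exact Finset.sum_congr rfl fun k _ => by ring
  -- value on R₃
  have hw3 : ∀ j ∈ R₃, w j = v j := by
    intro j hj
    simp only [hw, hv, Matrix.mulVec, dotProduct]
    refine Finset.sum_congr rfl fun k _ => ?_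
    by_cases hk : k ∈ S₁ ∪ S₂
    · rw [hsupp₃ j hj k hk, zero_mul, zero_mul]
    · have hk1 : k ∉ S₁ := fun h => hk (Finset.mem_union_left _ h)
      have hk2 : k ∉ S₂ := fun h => hk (Finset.mem_union_right _ h)
      rw [hβstar k, if_neg hk1, if_neg hk2]
  -- split the sums
  have huniv : (Finset.univ : Finset (Fin m)) = (R₁ ∪ R₂) ∪ R₃ := by
    ext j
    simp only [Finset.mem_univ, Finset.mem_union, true_iff]
    rcases hcover j with h | h | h <;> tauto
  have hd : Disjoint (R₁ ∪ R₂) R₃ := Finset.disjoint_union_left.mpr ⟨hd₁₃, hd₂₃⟩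
  have split : ∀ u : Fin m → ℝ,
      ∑ j, |u j| = (∑ j ∈ R₁, |u j| + ∑ j ∈ R₂, |u j|) + ∑ j ∈ R₃, |u j| := by
    intro u
    rw [← Finset.sum_union hd₁₂, ← Finset.sum_union hd, ← huniv]
  -- reindex R₂ sums via r
  have e2w : ∑ j ∈ R₂, |w j| = ∑ j ∈ R₁, |(1 - s) * (v j + v (r j))| := by
    refine Finset.sum_nbij' rinv r (fun j hj => hr₂ j hj) (fun j hj => hr₁ j hj)
      (fun j hj => hr₄ j hj) (fun j hj => hr₃ j hj) (fun j hj => ?_)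
    rw [hw2 j hj, hr₄ j hj]
  have e2v : ∑ j ∈ R₂, |v j| = ∑ j ∈ R₁, |v (r j)| := by
    refine Finset.sum_nbij' rinv r (fun j hj => hr₂ j hj) (fun j hj => hr₁ j hj)
      (fun j hj => hr₄ j hj) (fun j hj => hr₃ j hj) (fun j hj => ?_)
    rw [hr₄ j hj]
  have e1w : ∑ j ∈ R₁, |w j| = ∑ j ∈ R₁, |s * (v j + v (r j))| :=
    Finset.sum_congr rfl fun j hj => by rw [hw1 j hj]
  have e3w : ∑ j ∈ R₃, |w j| = ∑ j ∈ R₃, |v j| :=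
    Finset.sum_congr rfl fun j hj => by rw [hw3 j hj]
  have key : ∑ j ∈ R₁, |w j| + ∑ j ∈ R₂, |w j| ≤ ∑ j ∈ R₁, |v j| + ∑ j ∈ R₂, |v j| := by
    rw [e1w, e2w, e2v, ← Finset.sum_add_distrib, ← Finset.sum_add_distrib]
    refine Finset.sum_le_sum fun j hj => ?_
    calc |s * (v j + v (r j))| + |(1 - s) * (v j + v (r j))|
        = |v j + v (r j)| := by
          rw [abs_mul, abs_mul, abs_of_nonneg hs0, abs_of_nonneg (show (0:ℝ) ≤ 1 - s by linarith)]; ring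
      _ ≤ |v j| + |v (r j)| := abs_add_le _ _
  rw [show l1norm w = _ from split w, show l1norm v = _ from split v, e3w]
  linarith
end

section
/- Let N, p ≥ 1, let X be an N×p real matrix with rows x_i, let y ∈ ℝ^N, β₀ ∈ ℝ, ν > 0, ρ ≥ 0, and let D_G be an m×p real matrix. Set D = [I_p ; ρ·D_G] (the (p+m)×p matrix stacking the identity on top of ρ·D_G) and fix γ ∈ ℝ^{p+m}. Define ℓ(β₀, β, γ) = (1/N) Σ_{i=1}^{N} [ log(1 + exp(y_i·(β₀ + ⟨x_i, β⟩))) − y_i·(β₀ + ⟨x_i, β⟩) ] + (1/(2ν))·‖Dβ − γ‖₂². Let i ∈ {1,…,p} and distinct j₁,…,j_m' ∈ {1,…,p}\{i} be coordinates such that: (a) every row of D_G vanishes on all coordinates in I = {i, j₁,…,j_{m'}} (the points are isolated in the graph); (b) γ_k = 0 for every identity row k of D indexed by a coordinate in I; (c) there exist s₁,…,s_{m'} > 0 with Σ_k s_k = 1 and X_{·,i} = Σ_{k=1}^{m'} s_k · X_{·,j_k}. If β̂* minimizes β ↦ ℓ(β₀, β, γ) over ℝ^p, then β̂*_i = Σ_{k=1}^{m'}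 s_k · β̂*_{j_k}; consequently |β̂*_i| ≤ max_k |β̂*_{j_k}|, and if the values |β̂*_{j_1}|, …, |β̂*_{j_{m'}}| are not all equal then |β̂*_i| < max_k |β̂*_{j_k}|. -/
/-- The GSplit LBI variable-splitting loss
`ℓ(β₀, β, γ) = logistic GLM loss + (1/(2ν))‖Dβ − γ‖₂²`,
where `D` is indexed by `Fin p ⊕ Fin m` (identity rows ⊕ graph rows). -/
noncomputable def splitloss {N p m : ℕ} (X : Matrix (Fin N) (Fin p) ℝ) (y : Fin N → ℝ)
    (ν : ℝ) (D : Matrix (Fin p ⊕ Fin m) (Fin p) ℝ) (γ : Fin p ⊕ Fin m → ℝ)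
    (β₀ : ℝ) (β : Fin p → ℝ) : ℝ :=
  logloss X y β₀ β + (1 / (2 * ν)) * ∑ t, (D.mulVec β t - γ t) ^ 2

/-- Lemma 2 (supplementary): in the GSplit LBI splitting loss with `D = [I ; ρD_G]`, if a
coordinate `i` is an exact convex combination of isolated coordinates `j₁,…,j_{m'}` in the
design matrix, and `γ` vanishes on the corresponding identity rows, then any minimizer β̂*
satisfies `β̂*_i = Σ_k s_k β̂*_{j_k}`; hence `|β̂*_i| ≤ max_k |β̂*_{j_k}|`, strictly unless all
the `|β̂*_{j_k}|` coincide. -/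
theorem gsplit_lbi_submerged_procedural_bias
    {N p m : ℕ} (hN : 1 ≤ N) (hp : 1 ≤ p)
    (X : Matrix (Fin N) (Fin p) ℝ) (y : Fin N → ℝ)
    (β₀ : ℝ) (ν : ℝ) (hν : 0 < ν) (ρ : ℝ) (hρ : 0 ≤ ρ)
    (DG : Matrix (Fin m) (Fin p) ℝ)
    (D : Matrix (Fin p ⊕ Fin m) (Fin p) ℝ)
    (hD : D = Matrix.fromRows (1 : Matrix (Fin p) (Fin p) ℝ) (ρ • DG))
    (γ : Fin p ⊕ Fin m → ℝ)
    -- the distinguished coordinate i and the distinct coordinates j₁, …, j_{m'} ≠ i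
    (i : Fin p) (m' : ℕ) (hm' : 0 < m')
    (j : Fin m' → Fin p) (hjinj : Function.Injective j) (hji : ∀ k, j k ≠ i)
    -- (a) the coordinates in I = {i, j₁, …, j_{m'}} are isolated in the graph
    (hisoi : ∀ t : Fin m, DG t i = 0) (hisoj : ∀ t : Fin m, ∀ k, DG t (j k) = 0)
    -- (b) γ vanishes on the identity rows indexed by coordinates in I
    (hγi : γ (Sum.inl i) = 0) (hγj : ∀ k, γ (Sum.inl (j k)) = 0)
    -- (c) column i of X is a convex combination of the columns j₁, …, j_{m'}
    (s : Fin m' → ℝ) (hspos : ∀ k, 0 < s k) (hssum : ∑ k, s k = 1)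
    (hXcol : ∀ row, X row i = ∑ k, s k * X row (j k))
    -- β̂* minimizes β ↦ ℓ(β₀, β, γ)
    (βstar : Fin p → ℝ)
    (hmin : ∀ β : Fin p → ℝ, splitloss X y ν D γ β₀ βstar ≤ splitloss X y ν D γ β₀ β) :
    βstar i = ∑ k, s k * βstar (j k) ∧
    |βstar i| ≤ Finset.univ.sup' (Finset.univ_nonempty_iff.mpr (Fin.pos_iff_nonempty.mp hm'))
        (fun k => |βstar (j k)|) ∧
    ((¬ ∀ k l, |βstar (j k)| = |βstar (j l)|) →
      |βstar i| < Finset.univ.sup' (Finset.univ_nonempty_iff.mpr (Fin.pos_iff_nonempty.mp hm'))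
        (fun k => |βstar (j k)|)) := by
  classical
  subst hD
  -- the perturbation direction
  set v : Fin p → ℝ :=
    fun c => (if c = i then (1:ℝ) else 0) - ∑ k, if c = j k then s k else 0 with hv
  have sumv : ∀ u : Fin p → ℝ, ∑ c, u c * v c = u i - ∑ k, s k * u (j k) := by
    intro u
    simp only [hv, mul_sub, Finset.sum_sub_distrib, Finset.mul_sum]
    congr 1
    · simp [mul_ite]
    · rw [Finset.sum_comm]
      refine Finset.sum_congr rfl fun k _ => ?_
      have : ∀ c : Fin p, u c * (if c = j k then s k else 0)
          = if c = j k then u (j k) * s k else 0 := by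
        intro c; split <;> simp_all [mul_comm]
      simp only [this, Finset.sum_ite_eq', Finset.mem_univ, if_pos, mul_comm]
  have hvi : v i = 1 := by
    have : ∀ k : Fin m', ((i = j k) = False) := fun k => by
      simp [Ne.symm (hji k)]
    simp [hv, this]
  have hvj : ∀ k, v (j k) = -(s k) := by
    intro k
    have h1 : ∀ k' : Fin m', (if j k = j k' then s k' else 0)
        = if k = k' then s k' else 0 := by
      intro k'
      by_cases h : k = k'
      · simp [h]
      · rw [if_neg h, if_neg (fun hh => h (hjinj hh))]
    simp only [hv, if_neg (hji k), h1, Finset.sum_ite_eq, Finset.mem_univ, if_pos]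
    ring
  -- key sums
  have hXv : ∀ row, ∑ c, X row c * v c = 0 := by
    intro row; rw [sumv, hXcol]; ring
  have hDGv : ∀ t' : Fin m, ∑ c, DG t' c * v c = 0 := by
    intro t'; rw [sumv, hisoi]; simp [hisoj]
  set A : ℝ := βstar i - ∑ k, s k * βstar (j k) with hA
  set B : ℝ := ∑ c, v c * v c with hB
  have hBval : B = 1 + ∑ k, s k * s k := by
    rw [hB, sumv v, hvi]
    have : ∑ k, s k * v (j k) = -∑ k, s k * s k := by
      rw [← Finset.sum_neg_distrib]
      exact Finset.sum_congr rfl fun k _ => by rw [hvj]; ring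
    rw [this]; ring
  have hBpos : 0 < B := by
    rw [hBval]
    have : 0 ≤ ∑ k, s k * s k :=
      Finset.sum_nonneg fun k _ => mul_self_nonneg _
    linarith
  have hAsum : ∑ c, (βstar c - γ (Sum.inl c)) * v c = A := by
    rw [sumv, hγi, hA, sub_zero]
    have h1 : ∀ k : Fin m', s k * (βstar (j k) - γ (Sum.inl (j k))) = s k * βstar (j k) := by
      intro k; rw [hγj]; ring
    rw [Finset.sum_congr rfl fun k _ => h1 k]
  -- expansion of the split loss along the direction v
  have key : ∀ t : ℝ, splitloss X y ν (Matrix.fromRows 1 (ρ • DG)) γ β₀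
      (fun c => βstar c + t * v c)
      = splitloss X y ν (Matrix.fromRows 1 (ρ • DG)) γ β₀ βstar
        + (1/(2*ν)) * (2*t*A + t^2 * B) := by
    intro t
    have hlin : ∀ (a : Fin p → ℝ), (∑ c, a c * v c = 0) →
        ∑ c, a c * (βstar c + t * v c) = ∑ c, a c * βstar c := by
      intro a hz
      have : ∀ c, a c * (βstar c + t * v c) = a c * βstar c + t * (a c * v c) := by
        intro c; ring
      simp only [this, Finset.sum_add_distrib, ← Finset.mul_sum, hz, mul_zero, add_zero]
    have hlog : logloss X y β₀ (fun c => βstar c + t * v c) = logloss X y β₀ βstar := by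
      unfold logloss
      congr 1
      exact Finset.sum_congr rfl fun r _ => by rw [hlin (X r) (hXv r)]
    unfold splitloss
    rw [hlog]
    have hpen : ∀ β : Fin p → ℝ,
        ∑ tt, ((Matrix.fromRows 1 (ρ • DG)).mulVec β tt - γ tt) ^ 2
        = ∑ c, (β c - γ (Sum.inl c))^2
          + ∑ t', (ρ * (∑ c, DG t' c * β c) - γ (Sum.inr t'))^2 := by
      intro β
      rw [Fintype.sum_sum_type]
      congr 1
      · refine Finset.sum_congr rfl fun c _ => ?_
        rw [Matrix.fromRows_mulVec, Sum.elim_inl, Matrix.one_mulVec]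
      · refine Finset.sum_congr rfl fun t' _ => ?_
        rw [Matrix.fromRows_mulVec, Sum.elim_inr]
        congr 2
        simp [Matrix.mulVec, dotProduct, Finset.mul_sum, mul_assoc]
    rw [hpen, hpen]
    have hinr : ∀ t' : Fin m, ∑ c, DG t' c * (βstar c + t * v c) = ∑ c, DG t' c * βstar c :=
      fun t' => hlin (DG t') (hDGv t')
    have hinl : ∑ c, ((βstar c + t * v c) - γ (Sum.inl c))^2
        = ∑ c, (βstar c - γ (Sum.inl c))^2 + (2*t*A + t^2*B) := by
      have : ∀ c, ((βstar c + t * v c) - γ (Sum.inl c))^2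
          = (βstar c - γ (Sum.inl c))^2 + (2*t) * ((βstar c - γ (Sum.inl c)) * v c)
            + t^2 * (v c * v c) := by intro c; ring
      simp only [this, Finset.sum_add_distrib, ← Finset.mul_sum, hAsum]
      rw [hB]; ring
    rw [hinl]
    have : ∀ t' : Fin m, (ρ * (∑ c, DG t' c * (βstar c + t * v c)) - γ (Sum.inr t'))^2
        = (ρ * (∑ c, DG t' c * βstar c) - γ (Sum.inr t'))^2 := by
      intro t'; rw [hinr t']
    simp only [this]
    ring
  -- minimality forces the quadratic to be nonnegative for all t
  have hquad : ∀ t : ℝ, 0 ≤ 2*t*A + t^2 * B := by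
    intro t
    have h := hmin (fun c => βstar c + t * v c)
    rw [key t] at h
    have h2ν : 0 < 1/(2*ν) := by positivity
    by_contra hq
    push_neg at hq
    have h3 : 0 < 1/(2*ν) * (-(2*t*A + t^2 * B)) :=
      mul_pos h2ν (by linarith)
    nlinarith
  have hA0 : A = 0 := by
    have h := hquad (-A / B)
    have hexp : 2*(-A/B)*A + (-A/B)^2 * B = -(A^2)/B := by
      field_simp; ring
    rw [hexp] at h
    have : A^2 ≤ 0 := by
      rw [div_nonneg_iff] at h
      rcases h with ⟨h1, _⟩ | ⟨h1, h2⟩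
      · nlinarith
      · nlinarith
    nlinarith [sq_nonneg A]
  have heq : βstar i = ∑ k, s k * βstar (j k) := by
    have := hA0; rw [hA] at this; linarith
  set M := Finset.univ.sup'
      (Finset.univ_nonempty_iff.mpr (Fin.pos_iff_nonempty.mp hm'))
      (fun k => |βstar (j k)|) with hM
  have hle : ∀ k, |βstar (j k)| ≤ M := fun k =>
    Finset.le_sup' (f := fun k => |βstar (j k)|) (Finset.mem_univ k)
  have habs : |βstar i| ≤ ∑ k, s k * |βstar (j k)| := by
    rw [heq]
    refine (Finset.abs_sum_le_sum_abs _ _).trans ?_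
    refine Finset.sum_le_sum fun k _ => ?_
    rw [abs_mul, abs_of_pos (hspos k)]
  refine ⟨heq, ?_, ?_⟩
  · calc |βstar i| ≤ ∑ k, s k * |βstar (j k)| := habs
      _ ≤ ∑ k, s k * M :=
        Finset.sum_le_sum fun k _ => mul_le_mul_of_nonneg_left (hle k) (hspos k).le
      _ = M := by rw [← Finset.sum_mul, hssum, one_mul]
  · intro hne
    push_neg at hne
    obtain ⟨k₁, k₂, hk⟩ := hne
    obtain ⟨k₀, -, hk₀⟩ := Finset.exists_mem_eq_sup'
      (Finset.univ_nonempty_iff.mpr (Fin.pos_iff_nonempty.mp hm'))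
      (fun k => |βstar (j k)|)
    have hlt : ∃ k', |βstar (j k')| < M := by
      by_cases h1 : |βstar (j k₁)| < M
      · exact ⟨k₁, h1⟩
      · refine ⟨k₂, lt_of_le_of_ne (hle k₂) fun h2 => ?_⟩
        exact hk (by rw [h2, eq_of_le_of_not_lt (hle k₁) h1])
    obtain ⟨k', hk'⟩ := hlt
    calc |βstar i| ≤ ∑ k, s k * |βstar (j k)| := habs
      _ < ∑ k, s k * M := by
        refine Finset.sum_lt_sum (fun k _ => mul_le_mul_of_nonneg_left (hle k) (hspos k).le)
          ⟨k', Finset.mem_univ k', ?_⟩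
        exact mul_lt_mul_of_pos_left hk' (hspos k')
      _ = M := by rw [← Finset.sum_mul, hssum, one_mul]
end
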